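/- arXiv:1610.00368 — 2 statements merged into one kernel-verified Lean document; each statement's English description precedes it below -/
import Mathlib

section
/- Let μ₀ be a probability measure on ℝ supported on (0,∞), and for ρ ∈ (0,1) let μ_ρ be the pushforward of μ₀ under x ↦ x/(1−ρ) (if μ₀ has density p₀, then μ_ρ has density p₁(x,ρ) = (1−ρ)p₀((1−ρ)x)). Fix c > 0 and suppose there exist K ≥ 0 and ρ₀ ∈ (0,1) such that KL(μ₀‖μ_ρ) ≤ cρ²/2 + Kρ³ for all ρ ∈ (0,ρ₀). Fix ε ∈ (0,1) and set ρ_N = ε/√(cN). Then for every sequence of measurable sets A_N ⊆ ℝ^N, liminf_{N→∞} [ μ₀^⊗N(A_N) + μ_{ρ_N}^⊗N(ℝ^N \ A_N) ] ≥ 1 − ε. (Hence Alice's buffering, which stretches the inter-arrival distribution by 1/(1−ρ_N) with ρ_N = ε/√(cN), is covert: every detector of Willie has P_FA + P_MD ≥ 1 − ε asymptotically.) -/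
open MeasureTheory ProbabilityTheory Filter
open scoped ENNReal Classical

/-! Testing a set `A` separates `P` from `Q` by at most `√KL(P‖Q)`: the squared Hellinger
distance of `(P A, P Aᶜ)` and `(Q A, Q Aᶜ)` bounds `(P A - Q A)²` and is bounded by the KL
divergence of the restrictions to `A` and `Aᶜ`, which add up to `KL(P‖Q)`. KL divergence
tensorizes, so `KL(μ₀^⊗N‖μ_ρ^⊗N) ≤ N (cρ²/2 + Kρ³) = ε²/2 + O(N^{-1/2})`, which is at most `ε²`
for large `N`. -/

noncomputable def klDiv {Ω : Type*} [MeasurableSpace Ω] (μ ν : Measure Ω) : ℝ≥0∞ :=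
  if μ ≪ ν ∧ Integrable (llr μ ν) μ then ENNReal.ofReal (∫ x, llr μ ν x ∂μ) else ∞

lemma MeasureTheory.Measure.rnDeriv_restrict_restrict_of_ac {α : Type*} [MeasurableSpace α]
    {μ ν : Measure α} [μ.HaveLebesgueDecomposition ν] [SigmaFinite ν] (hμν : μ ≪ ν)
    {s : Set α} (hs : MeasurableSet s) :
    (μ.restrict s).rnDeriv (ν.restrict s) =ᵐ[ν.restrict s] μ.rnDeriv ν := by
  have h : μ.restrict s = (ν.restrict s).withDensity (μ.rnDeriv ν) := by
    rw [← restrict_withDensity hs, Measure.withDensity_rnDeriv_eq μ ν hμν]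
  rw [h]
  exact Measure.rnDeriv_withDensity _ (Measure.measurable_rnDeriv μ ν)

lemma Real.sq_sqrt_sub_sqrt_le_mul_log_div_add_sub {x y : ℝ} (hx : 0 ≤ x) (hy : 0 ≤ y)
    (hxy : y = 0 → x = 0) : (√x - √y) ^ 2 ≤ x * Real.log (x / y) + y - x := by
  rcases hx.eq_or_lt with rfl | hx
  · simp [Real.sq_sqrt hy]
  have hy : 0 < y := hy.lt_of_ne' fun h ↦ hx.ne' (hxy h)
  have hu : 0 < √x := Real.sqrt_pos.2 hx
  have hv : 0 < √y := Real.sqrt_pos.2 hy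
  have h_log : 1 - √y / √x ≤ Real.log (√x / √y) := by
    simpa using Real.one_sub_inv_le_log_of_pos (div_pos hu hv)
  have h_log_sq : Real.log (x / y) = 2 * Real.log (√x / √y) := by
    rw [← Real.sq_sqrt hx.le, ← Real.sq_sqrt hy.le, ← div_pow, Real.log_pow, Real.sqrt_sq hu.le,
      Real.sqrt_sq hv.le, Nat.cast_ofNat]
  have h_mul : x * (1 - √y / √x) = x - √x * √y := by
    field_simp
    linear_combination √y * Real.sq_sqrt hx.le
  rw [h_log_sq]
  nlinarith [Real.sq_sqrt hx.le, Real.sq_sqrt hy.le]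

lemma Real.sq_sub_le_sq_sqrt_sub_add_sq_sqrt_one_sub_sub {p q : ℝ} (hp₀ : 0 ≤ p) (hp₁ : p ≤ 1)
    (hq₀ : 0 ≤ q) (hq₁ : q ≤ 1) :
    (p - q) ^ 2 ≤ (√p - √q) ^ 2 + (√(1 - p) - √(1 - q)) ^ 2 := by
  obtain ⟨u, hu, rfl⟩ : ∃ u, 0 ≤ u ∧ u ^ 2 = p := ⟨√p, Real.sqrt_nonneg p, Real.sq_sqrt hp₀⟩
  obtain ⟨v, hv, rfl⟩ : ∃ v, 0 ≤ v ∧ v ^ 2 = q := ⟨√q, Real.sqrt_nonneg q, Real.sq_sqrt hq₀⟩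
  have ha := Real.sq_sqrt (sub_nonneg.2 hp₁)
  have hb := Real.sq_sqrt (sub_nonneg.2 hq₁)
  set a := √(1 - u ^ 2)
  set b := √(1 - v ^ 2)
  rw [Real.sqrt_sq hu, Real.sqrt_sq hv]
  -- `(u² - v²)² = (u - v)(u + v) · (b - a)(b + a)`, and `(u + v)(a + b) ≤ 2` by Cauchy–Schwarz
  have h_st : (u + v) * (a + b) ≤ 2 := by
    nlinarith [sq_nonneg (u - v), sq_nonneg (a - b), sq_nonneg ((u + v) * (a + b) - 2),
      sq_nonneg (u ^ 2 + v ^ 2 - 1), sq_nonneg (u + v), sq_nonneg (a + b)]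
  nlinarith [sq_nonneg ((u - v) * (a + b) - (b - a) * (u + v)),
    sq_nonneg ((u - v) * (a + b) + (b - a) * (u + v)), sq_nonneg (u - v), sq_nonneg (a - b),
    mul_nonneg (mul_nonneg hu hv)
      (mul_nonneg (Real.sqrt_nonneg (1 - u ^ 2)) (Real.sqrt_nonneg (1 - v ^ 2)))]

namespace InformationTheory

variable {α β : Type*} [MeasurableSpace α] [MeasurableSpace β]

lemma klDiv_restrict_add_klDiv_restrict_compl {μ ν : Measure α} [IsFiniteMeasure μ]
    [IsFiniteMeasure ν] (hμν : μ ≪ ν) {s : Set α} (hs : MeasurableSet s) :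
    klDiv (μ.restrict s) (ν.restrict s) + klDiv (μ.restrict sᶜ) (ν.restrict sᶜ) = klDiv μ ν := by
  have h_restrict {t : Set α} (ht : MeasurableSet t) : klDiv (μ.restrict t) (ν.restrict t) =
      ∫⁻ x in t, ENNReal.ofReal (klFun (μ.rnDeriv ν x).toReal) ∂ν := by
    rw [klDiv_eq_lintegral_klFun_of_ac (hμν.restrict t)]
    refine lintegral_congr_ae ?_
    filter_upwards [Measure.rnDeriv_restrict_restrict_of_ac hμν ht] with x hx
    rw [hx]
  rw [h_restrict hs, h_restrict hs.compl, lintegral_add_compl _ hs,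
    klDiv_eq_lintegral_klFun_of_ac hμν]

lemma klDiv_map_measurableEquiv (μ ν : Measure α) [IsFiniteMeasure μ] [IsFiniteMeasure ν]
    (e : α ≃ᵐ β) : klDiv (μ.map e) (ν.map e) = klDiv μ ν := by
  refine le_antisymm (klDiv_map_le μ ν e.measurable) ?_
  calc klDiv μ ν = klDiv ((μ.map e).map e.symm) ((ν.map e).map e.symm) := by
        rw [e.map_symm_map, e.map_symm_map]
    _ ≤ klDiv (μ.map e) (ν.map e) := klDiv_map_le _ _ e.symm.measurable

lemma klDiv_prod (μ ν : Measure α) (μ' ν' : Measure β) [IsProbabilityMeasure μ]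
    [IsProbabilityMeasure ν] [IsProbabilityMeasure μ'] [IsProbabilityMeasure ν'] :
    klDiv (μ.prod μ') (ν.prod ν') = klDiv μ ν + klDiv μ' ν' := by
  have h_snd : klDiv (μ.prod μ') (μ.prod ν') = klDiv μ' ν' := by
    rw [← klDiv_map_measurableEquiv _ _ MeasurableEquiv.prodComm]
    change klDiv ((μ.prod μ').map Prod.swap) ((μ.prod ν').map Prod.swap) = _
    rw [Measure.prod_swap, Measure.prod_swap, ← Measure.compProd_const, ← Measure.compProd_const,
      klDiv_compProd_left]
  rw [← Measure.compProd_const, ← Measure.compProd_const, klDiv_compProd_eq_add,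
    Measure.compProd_const, Measure.compProd_const, h_snd]

lemma klDiv_pi {n : ℕ} {α : Fin n → Type*} [∀ i, MeasurableSpace (α i)]
    (μ ν : (i : Fin n) → Measure (α i)) [∀ i, IsProbabilityMeasure (μ i)]
    [∀ i, IsProbabilityMeasure (ν i)] :
    klDiv (Measure.pi μ) (Measure.pi ν) = ∑ i, klDiv (μ i) (ν i) := by
  induction n with
  | zero => rw [Measure.pi_of_empty μ, Measure.pi_of_empty ν, klDiv_self, Fin.sum_univ_zero]
  | succ n ih =>
    rw [← klDiv_map_measurableEquiv _ _ (MeasurableEquiv.piFinSuccAbove α 0),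
      (measurePreserving_piFinSuccAbove μ 0).map_eq, (measurePreserving_piFinSuccAbove ν 0).map_eq,
      klDiv_prod, ih, Fin.sum_univ_succAbove _ 0]

lemma ofReal_sq_sub_le_klDiv (μ ν : Measure α) [IsProbabilityMeasure μ] [IsProbabilityMeasure ν]
    {s : Set α} (hs : MeasurableSet s) :
    ENNReal.ofReal ((μ.real s - ν.real s) ^ 2) ≤ klDiv μ ν := by
  by_cases hμν : μ ≪ ν
  swap; · simp [klDiv_of_not_ac hμν]
  have h_part {t : Set α} : ENNReal.ofReal ((√(μ.real t) - √(ν.real t)) ^ 2) ≤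
      klDiv (μ.restrict t) (ν.restrict t) := by
    refine (ENNReal.ofReal_le_ofReal (Real.sq_sqrt_sub_sqrt_le_mul_log_div_add_sub
      measureReal_nonneg measureReal_nonneg fun h ↦ ?_)).trans ?_
    · rw [measureReal_eq_zero_iff] at h ⊢
      exact hμν h
    · simpa only [measureReal_restrict_apply_univ] using
        mul_log_le_klDiv (μ.restrict t) (ν.restrict t)
  calc ENNReal.ofReal ((μ.real s - ν.real s) ^ 2)
      ≤ ENNReal.ofReal ((√(μ.real s) - √(ν.real s)) ^ 2 + (√(μ.real sᶜ) - √(ν.real sᶜ)) ^ 2) := by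
        rw [probReal_compl_eq_one_sub hs, probReal_compl_eq_one_sub hs]
        exact ENNReal.ofReal_le_ofReal (Real.sq_sub_le_sq_sqrt_sub_add_sq_sqrt_one_sub_sub
          measureReal_nonneg measureReal_le_one measureReal_nonneg measureReal_le_one)
    _ ≤ klDiv (μ.restrict s) (ν.restrict s) + klDiv (μ.restrict sᶜ) (ν.restrict sᶜ) :=
        ENNReal.ofReal_add_le.trans (add_le_add h_part h_part)
    _ = klDiv μ ν := klDiv_restrict_add_klDiv_restrict_compl hμν hs

lemma one_sub_ofReal_le_measure_add_measure_compl_of_klDiv_le (μ ν : Measure α)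
    [IsProbabilityMeasure μ] [IsProbabilityMeasure ν] {s : Set α} (hs : MeasurableSet s) {ε : ℝ}
    (hε : 0 ≤ ε) (h : klDiv μ ν ≤ ENNReal.ofReal (ε ^ 2)) :
    1 - ENNReal.ofReal ε ≤ μ s + ν sᶜ := by
  have h_sq : (μ.real s - ν.real s) ^ 2 ≤ ε ^ 2 :=
    (ENNReal.ofReal_le_ofReal_iff (sq_nonneg ε)).1 ((ofReal_sq_sub_le_klDiv μ ν hs).trans h)
  have h_diff : ν.real s - μ.real s ≤ ε := by linarith [(abs_le_of_sq_le_sq' h_sq hε).1]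
  rw [← ofReal_measureReal, ← ofReal_measureReal, probReal_compl_eq_one_sub hs,
    ← ENNReal.ofReal_add measureReal_nonneg (sub_nonneg.2 measureReal_le_one), ← ENNReal.ofReal_one,
    ← ENNReal.ofReal_sub _ hε]
  exact ENNReal.ofReal_le_ofReal (by linarith)

end InformationTheory

lemma klDiv_eq_informationTheory_klDiv {α : Type*} [MeasurableSpace α] (μ ν : Measure α)
    [IsProbabilityMeasure μ] [IsProbabilityMeasure ν] :
    klDiv μ ν = InformationTheory.klDiv μ ν := by
  unfold klDiv
  split_ifs with h
  · simp [InformationTheory.klDiv_of_ac_of_integrable h.1 h.2]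
  · exact (InformationTheory.klDiv_eq_top_iff.2 fun h₁ h₂ ↦ h ⟨h₁, h₂⟩).symm

lemma natCast_mul_quadratic_add_cubic_le_sq {c K ε : ℝ} (hc : 0 < c) {N : ℕ} (hN : N ≠ 0)
    (hK : K * (ε / √(c * N)) < c / 2) :
    N * (c * (ε / √(c * N)) ^ 2 / 2 + K * (ε / √(c * N)) ^ 3) ≤ ε ^ 2 := by
  set ρ := ε / √(c * N)
  have hNρ : N * ρ ^ 2 = ε ^ 2 / c := by
    rw [div_pow, Real.sq_sqrt (by positivity)]
    field_simp
  calc N * (c * ρ ^ 2 / 2 + K * ρ ^ 3) = ε ^ 2 / c * (c / 2 + K * ρ) := by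
        rw [← hNρ]
        ring
    _ ≤ ε ^ 2 / c * c := by gcongr; linarith
    _ = ε ^ 2 := div_mul_cancel₀ _ hc.ne'

lemma tendsto_div_sqrt_mul_natCast {c : ℝ} (hc : 0 < c) (ε : ℝ) :
    Tendsto (fun N : ℕ ↦ ε / √(c * N)) atTop (nhds 0) :=
  tendsto_const_nhds.div_atTop
    (Real.tendsto_sqrt_atTop.comp (tendsto_natCast_atTop_atTop.const_mul_atTop hc))

theorem stmt_2_general (μ₀ : Measure ℝ) [IsProbabilityMeasure μ₀]
    (c : ℝ) (hc : 0 < c)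
    (hKL : ∃ K : ℝ, 0 ≤ K ∧ ∃ ρ₀ ∈ Set.Ioo (0:ℝ) 1, ∀ ρ ∈ Set.Ioo (0:ℝ) ρ₀,
      klDiv μ₀ (Measure.map (fun x : ℝ => x / (1 - ρ)) μ₀) ≤
        ENNReal.ofReal (c * ρ ^ 2 / 2 + K * ρ ^ 3))
    (ε : ℝ) (hε : ε ∈ Set.Ioo (0:ℝ) 1)
    (A : (N : ℕ) → Set (Fin N → ℝ)) (hA : ∀ N, MeasurableSet (A N)) :
    1 - ENNReal.ofReal ε ≤
      Filter.liminf
        (fun N : ℕ =>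
          (Measure.pi fun _ : Fin N => μ₀) (A N) +
            (Measure.pi fun _ : Fin N =>
              Measure.map (fun x : ℝ => x / (1 - ε / Real.sqrt (c * N))) μ₀) ((A N)ᶜ))
        atTop := by
  obtain ⟨hε₀, -⟩ := hε
  obtain ⟨K, -, ρ₀, hρ₀, hKL⟩ := hKL
  have (r : ℝ) : IsProbabilityMeasure (μ₀.map fun x ↦ x / (1 - r)) :=
    Measure.isProbabilityMeasure_map (measurable_id.div_const _).aemeasurable
  set ρ : ℕ → ℝ := fun N ↦ ε / √(c * N)
  have hρ : Tendsto ρ atTop (nhds 0) := tendsto_div_sqrt_mul_natCast hc ε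
  have hKρ : Tendsto (fun N ↦ K * ρ N) atTop (nhds 0) := by simpa using hρ.const_mul K
  refine le_liminf_of_le (by isBoundedDefault) ?_
  filter_upwards [eventually_ne_atTop 0, hρ.eventually_lt_const hρ₀.1,
    hKρ.eventually_lt_const (half_pos hc)] with N hN hρN hKρN
  have hρN₀ : 0 < ρ N := div_pos hε₀ (Real.sqrt_pos.2 (by positivity))
  refine InformationTheory.one_sub_ofReal_le_measure_add_measure_compl_of_klDiv_le _ _ (hA N)
    hε₀.le ?_
  have h_one := hKL (ρ N) ⟨hρN₀, hρN⟩
  rw [klDiv_eq_informationTheory_klDiv] at h_one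
  calc InformationTheory.klDiv (Measure.pi fun _ : Fin N ↦ μ₀)
        (Measure.pi fun _ : Fin N ↦ Measure.map (fun x ↦ x / (1 - ρ N)) μ₀)
      = N * InformationTheory.klDiv μ₀ (Measure.map (fun x ↦ x / (1 - ρ N)) μ₀) := by
        simp [InformationTheory.klDiv_pi]
    _ ≤ N * ENNReal.ofReal (c * ρ N ^ 2 / 2 + K * ρ N ^ 3) := by gcongr
    _ = ENNReal.ofReal (N * (c * ρ N ^ 2 / 2 + K * ρ N ^ 3)) := by
        rw [← ENNReal.ofReal_natCast, ← ENNReal.ofReal_mul (Nat.cast_nonneg N)]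
    _ ≤ ENNReal.ofReal (ε ^ 2) :=
        ENNReal.ofReal_le_ofReal (natCast_mul_quadratic_add_cubic_le_sq hc hN hKρN)

/-- Let `μ₀` be a probability measure on `ℝ` supported on `(0,∞)`, and for
`ρ ∈ (0,1)` let `μ_ρ` be the pushforward of `μ₀` under `x ↦ x/(1−ρ)`.  Suppose
`KL(μ₀‖μ_ρ) ≤ cρ²/2 + Kρ³` for all small `ρ`, and set `ρ_N = ε/√(cN)` with `ε ∈ (0,1)`.
Then for every sequence of measurable sets `A_N ⊆ ℝ^N`,
`liminf_N [μ₀^⊗N(A_N) + μ_{ρ_N}^⊗N(A_Nᶜ)] ≥ 1 − ε`. -/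
theorem stmt_2 (μ₀ : Measure ℝ) [IsProbabilityMeasure μ₀]
    (hsupp : μ₀ {x : ℝ | x ≤ 0} = 0)
    (c : ℝ) (hc : 0 < c)
    (hKL : ∃ K : ℝ, 0 ≤ K ∧ ∃ ρ₀ ∈ Set.Ioo (0:ℝ) 1, ∀ ρ ∈ Set.Ioo (0:ℝ) ρ₀,
      klDiv μ₀ (Measure.map (fun x : ℝ => x / (1 - ρ)) μ₀) ≤
        ENNReal.ofReal (c * ρ ^ 2 / 2 + K * ρ ^ 3))
    (ε : ℝ) (hε : ε ∈ Set.Ioo (0:ℝ) 1)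
    (A : (N : ℕ) → Set (Fin N → ℝ)) (hA : ∀ N, MeasurableSet (A N)) :
    1 - ENNReal.ofReal ε ≤
      Filter.liminf
        (fun N : ℕ =>
          (Measure.pi fun _ : Fin N => μ₀) (A N) +
            (Measure.pi fun _ : Fin N =>
              Measure.map (fun x : ℝ => x / (1 - ε / Real.sqrt (c * N))) μ₀) ((A N)ᶜ))
        atTop :=
  stmt_2_general μ₀ c hc hKL ε hε A hA
end

section
/- Let λ > 0 and let (A_i)_{i≥1} be i.i.d. strictly positive random variables with mean 1/λ and finite variance σ² ∈ (0,∞). Let α ∈ (0,1), let (ρ_N)_{N≥1} ⊆ (0,1) satisfy √N·ρ_N → ∞ as N → ∞, and set U_N = √(N·σ²/α). Consider the threshold test that rejects H₀ exactly when the observed sum of N inter-arrival times exceeds N/λ + U_N. Then: (i) for every N, P( Σ_{i=1}^{N} A_i > N/λ + U_N ) ≤ α (false-alarm probability at most α); and (ii) lim_{N→∞} P( (1/(1−ρ_N))·Σ_{i=1}^{N} A_i ≤ N/λ + U_N ) = 0 (missed-detection probability tends to 0). Hence if Alice slows the stream by 1/(1−ρ_N) with ρ_N = ω(1/√N) — i.e.,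 buffers ω(√N) packets — Willie can detect her with arbitrarily small P_FA + P_MD. -/
open MeasureTheory ProbabilityTheory Filter
open scoped ENNReal

/-!
Both error probabilities are controlled by Chebyshev's inequality for the sum `S_N` of `N` i.i.d.
square-integrable variables, whose mean is `N/λ` and variance `Nσ²`. The threshold `U_N` is chosen
so that `Nσ² / U_N² = α`. Under `H₁`, `S_N / (1 - ρ_N) ≤ N/λ + U_N` forces `S_N` below its mean
by at least `ρ_N N/λ - U_N`, which is `√N (√N ρ_N / λ - σ/√α)`; this is `√N` times a quantity
tending to infinity, so Chebyshev's bound `σ² / (√N ρ_N / λ - σ/√α)²` tends to `0`.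
-/

section IIDSum

variable {Ω : Type*} [MeasureSpace Ω] {A : ℕ → Ω → ℝ}

lemma integral_sum_range_of_identDistrib (hident : ∀ i, IdentDistrib (A i) (A 0) ℙ ℙ)
    (hint : Integrable (A 0) ℙ) (N : ℕ) :
    ∫ ω, ∑ i ∈ Finset.range N, A i ω = N * ∫ ω, A 0 ω := by
  rw [integral_finsetSum _ fun i _ => (hident i).symm.integrable_snd hint]
  simp [fun i => (hident i).integral_eq]

lemma variance_sum_range_of_iIndepFun (hindep : iIndepFun A ℙ)
    (hident : ∀ i, IdentDistrib (A i) (A 0) ℙ ℙ) (hL2 : MemLp (A 0) 2 ℙ) (N : ℕ) :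
    variance (∑ i ∈ Finset.range N, A i) ℙ = N * variance (A 0) ℙ := by
  rw [IndepFun.variance_sum (fun i _ => (hident i).symm.memLp_snd hL2)
    fun i _ j _ hij => hindep.indepFun hij]
  simp [fun i => (hident i).variance_eq]

lemma measure_le_abs_sum_range_sub_le [IsFiniteMeasure (ℙ : Measure Ω)]
    (hindep : iIndepFun A ℙ)
    (hident : ∀ i, IdentDistrib (A i) (A 0) ℙ ℙ) (hL2 : MemLp (A 0) 2 ℙ) (N : ℕ) {c : ℝ}
    (hc : 0 < c) :
    ℙ {ω | c ≤ |∑ i ∈ Finset.range N, A i ω - N * ∫ ω, A 0 ω|} ≤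
      ENNReal.ofReal (N * variance (A 0) ℙ / c ^ 2) := by
  have hL2sum : MemLp (∑ i ∈ Finset.range N, A i) 2 ℙ :=
    memLp_finsetSum' _ fun i _ => (hident i).symm.memLp_snd hL2
  have h := meas_ge_le_variance_div_sq hL2sum hc
  simp only [Finset.sum_apply] at h
  rwa [integral_sum_range_of_identDistrib hident (hL2.integrable one_le_two),
    variance_sum_range_of_iIndepFun hindep hident hL2] at h

lemma tendsto_measure_le_abs_sum_range_sub [IsFiniteMeasure (ℙ : Measure Ω)]
    (hindep : iIndepFun A ℙ) (hident : ∀ i, IdentDistrib (A i) (A 0) ℙ ℙ)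
    (hL2 : MemLp (A 0) 2 ℙ) {c : ℕ → ℝ} (hc : Tendsto (fun N => c N / √N) atTop atTop) :
    Tendsto (fun N => ℙ {ω | c N ≤ |∑ i ∈ Finset.range N, A i ω - N * ∫ ω, A 0 ω|})
      atTop (nhds 0) := by
  have hbound : ∀ᶠ N : ℕ in atTop,
      ℙ {ω | c N ≤ |∑ i ∈ Finset.range N, A i ω - N * ∫ ω, A 0 ω|} ≤
        ENNReal.ofReal (variance (A 0) ℙ / (c N / √N) ^ 2) := by
    filter_upwards [hc.eventually_gt_atTop 0] with N hN
    have hsqrtN : 0 < √(N : ℝ) := (Real.sqrt_nonneg _).lt_of_ne fun h => by simp [← h] at hN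
    refine (measure_le_abs_sum_range_sub_le hindep hident hL2 N
      ((div_pos_iff_of_pos_right hsqrtN).mp hN)).trans_eq ?_
    rw [div_pow, Real.sq_sqrt N.cast_nonneg, div_div_eq_mul_div, mul_comm]
  have hlim : Tendsto (fun N => ENNReal.ofReal (variance (A 0) ℙ / (c N / √N) ^ 2))
      atTop (nhds 0) := by
    simpa using ENNReal.tendsto_ofReal
      (tendsto_const_nhds.div_atTop ((tendsto_pow_atTop two_ne_zero).comp hc))
  exact tendsto_of_tendsto_of_tendsto_of_le_of_le' tendsto_const_nhds hlim
    (Eventually.of_forall fun _ => zero_le) hbound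

lemma measure_add_sqrt_lt_sum_range_le [IsFiniteMeasure (ℙ : Measure Ω)]
    (hindep : iIndepFun A ℙ) (hident : ∀ i, IdentDistrib (A i) (A 0) ℙ ℙ)
    (hL2 : MemLp (A 0) 2 ℙ) (hvar : 0 < variance (A 0) ℙ) {α : ℝ} (hα : 0 < α) (N : ℕ) :
    ℙ {ω | N * (∫ ω, A 0 ω) + √(N * variance (A 0) ℙ / α) < ∑ i ∈ Finset.range N, A i ω} ≤
      ENNReal.ofReal α := by
  rcases N.eq_zero_or_pos with rfl | hN
  · simp
  set u := √(N * variance (A 0) ℙ / α)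
  have hu : 0 < u := Real.sqrt_pos.mpr (by positivity)
  calc ℙ {ω | N * (∫ ω, A 0 ω) + u < ∑ i ∈ Finset.range N, A i ω}
      ≤ ℙ {ω | u ≤ |∑ i ∈ Finset.range N, A i ω - N * ∫ ω, A 0 ω|} :=
        measure_mono fun ω hω => by
          rw [Set.mem_ofPred_eq] at hω ⊢
          exact le_abs.mpr (.inl (by linarith))
    _ ≤ ENNReal.ofReal (N * variance (A 0) ℙ / u ^ 2) :=
        measure_le_abs_sum_range_sub_le hindep hident hL2 N hu
    _ = ENNReal.ofReal α := by
        rw [Real.sq_sqrt (by positivity), div_div_cancel₀ (by positivity)]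

lemma tendsto_measure_sum_range_div_le [IsFiniteMeasure (ℙ : Measure Ω)]
    (hindep : iIndepFun A ℙ) (hident : ∀ i, IdentDistrib (A i) (A 0) ℙ ℙ)
    (hL2 : MemLp (A 0) 2 ℙ) (hm : 0 < ∫ ω, A 0 ω) {ρ : ℕ → ℝ} (hρ : ∀ N, ρ N ∈ Set.Ioo (0:ℝ) 1)
    (hρω : Tendsto (fun N : ℕ => √N * ρ N) atTop atTop) (K : ℝ) :
    Tendsto (fun N : ℕ => ℙ {ω | (1 / (1 - ρ N)) * ∑ i ∈ Finset.range N, A i ω ≤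
      N * (∫ ω, A 0 ω) + √(N * K)}) atTop (nhds 0) := by
  set m := ∫ ω, A 0 ω
  set c : ℕ → ℝ := fun N => ρ N * (N * m) - √(N * K)
  have hc : Tendsto (fun N => c N / √N) atTop atTop := by
    refine tendsto_atTop_add_const_right _ (-√K) (hρω.atTop_mul_const hm) |>.congr' ?_
    filter_upwards [eventually_gt_atTop 0] with N hN
    have hsqrtN : 0 < √(N : ℝ) := Real.sqrt_pos.mpr (by exact_mod_cast hN)
    simp only [c]
    rw [eq_div_iff hsqrtN.ne', Real.sqrt_mul N.cast_nonneg K]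
    linear_combination (ρ N * m) * Real.mul_self_sqrt (N.cast_nonneg : (0:ℝ) ≤ N)
  refine tendsto_of_tendsto_of_tendsto_of_le_of_le tendsto_const_nhds
    (tendsto_measure_le_abs_sum_range_sub hindep hident hL2 hc) (fun _ => zero_le) fun N => ?_
  refine measure_mono fun ω hω => ?_
  obtain ⟨hρ0, hρ1⟩ := hρ N
  rw [Set.mem_ofPred_eq] at hω ⊢
  rw [one_div, inv_mul_le_iff₀ (sub_pos.mpr hρ1)] at hω
  refine le_abs.mpr (.inr ?_)
  have : 0 ≤ ρ N * √(N * K) := mul_nonneg hρ0.le (Real.sqrt_nonneg _)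
  simp only [c]
  linarith

end IIDSum

theorem stmt_6_general {Ω : Type*} [MeasureSpace Ω] [IsProbabilityMeasure (ℙ : Measure Ω)]
    (lam σ : ℝ) (hlam : 0 < lam) (hσ : 0 < σ)
    (A : ℕ → Ω → ℝ)
    (hindep : iIndepFun A ℙ)
    (hident : ∀ i, IdentDistrib (A i) (A 0) ℙ ℙ)
    (hL2 : MemLp (A 0) 2 ℙ)
    (hmean : ∫ ω, A 0 ω ∂(ℙ : Measure Ω) = 1 / lam)
    (hvar : variance (A 0) ℙ = σ ^ 2)
    (α : ℝ) (hα : α ∈ Set.Ioo (0:ℝ) 1)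
    (ρ : ℕ → ℝ) (hρ : ∀ N, ρ N ∈ Set.Ioo (0:ℝ) 1)
    (hρω : Tendsto (fun N : ℕ => Real.sqrt N * ρ N) atTop atTop)
    (U : ℕ → ℝ) (hU : ∀ N, U N = Real.sqrt (N * σ ^ 2 / α)) :
    (∀ N : ℕ,
        (ℙ : Measure Ω) {ω | (N : ℝ) / lam + U N < ∑ i ∈ Finset.range N, A i ω} ≤
          ENNReal.ofReal α) ∧
      Tendsto
        (fun N : ℕ =>
          (ℙ : Measure Ω)
            {ω | (1 / (1 - ρ N)) * ∑ i ∈ Finset.range N, A i ω ≤ (N : ℝ) / lam + U N})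
        atTop (nhds 0) := by
  obtain rfl : U = fun N : ℕ => √(N * σ ^ 2 / α) := funext hU
  constructor
  · intro N
    simpa only [hmean, hvar, mul_one_div] using measure_add_sqrt_lt_sum_range_le hindep hident
      hL2 (hvar ▸ pow_pos hσ 2) hα.1 N
  · simpa only [hmean, mul_one_div, hvar, mul_div_assoc] using
      tendsto_measure_sum_range_div_le hindep hident hL2 (hmean ▸ one_div_pos.mpr hlam) hρ hρω
        (σ ^ 2 / α)

/-- converse for buffering: Let `(A i)` be i.i.d., strictly positive, with
mean `1/λ` and variance `σ² ∈ (0,∞)`.  Let `α ∈ (0,1)`, `ρ_N ∈ (0,1)` with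
`√N·ρ_N → ∞`, and `U_N = √(Nσ²/α)`.  Then Willie's threshold test (reject `H₀` when the
sum of the `N` inter-arrival times exceeds `N/λ + U_N`) has false-alarm probability at
most `α` for every `N`, and missed-detection probability tending to `0`. -/
theorem stmt_6 {Ω : Type*} [MeasureSpace Ω] [IsProbabilityMeasure (ℙ : Measure Ω)]
    (lam σ : ℝ) (hlam : 0 < lam) (hσ : 0 < σ)
    (A : ℕ → Ω → ℝ)
    (hmeas : ∀ i, Measurable (A i))
    (hindep : iIndepFun A ℙ)
    (hident : ∀ i, IdentDistrib (A i) (A 0) ℙ ℙ)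
    (hpos : ∀ i, ∀ᵐ ω ∂(ℙ : Measure Ω), 0 < A i ω)
    (hL2 : MemLp (A 0) 2 ℙ)
    (hmean : ∫ ω, A 0 ω ∂(ℙ : Measure Ω) = 1 / lam)
    (hvar : variance (A 0) ℙ = σ ^ 2)
    (α : ℝ) (hα : α ∈ Set.Ioo (0:ℝ) 1)
    (ρ : ℕ → ℝ) (hρ : ∀ N, ρ N ∈ Set.Ioo (0:ℝ) 1)
    (hρω : Tendsto (fun N : ℕ => Real.sqrt N * ρ N) atTop atTop)
    (U : ℕ → ℝ) (hU : ∀ N, U N = Real.sqrt (N * σ ^ 2 / α)) :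
    (∀ N : ℕ,
        (ℙ : Measure Ω) {ω | (N : ℝ) / lam + U N < ∑ i ∈ Finset.range N, A i ω} ≤
          ENNReal.ofReal α) ∧
      Tendsto
        (fun N : ℕ =>
          (ℙ : Measure Ω)
            {ω | (1 / (1 - ρ N)) * ∑ i ∈ Finset.range N, A i ω ≤ (N : ℝ) / lam + U N})
        atTop (nhds 0) :=
  stmt_6_general lam σ hlam hσ A hindep hident hL2 hmean hvar α hα ρ hρ hρω U hU
end
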